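/- Fix real numbers k_s, k_m, k_ℓ, set 𝛂 = k_s + k_ℓ − 1/2 and 𝛃 = k_ℓ − 1/2, and let 1 ≤ i ≤ r. Let (ξ_1,…,ξ_i) ∈ D_k(Θ_i), and let λ = (λ_1,…,λ_r) ∈ ℂ^r with λ_j = ξ_j for 1 ≤ j ≤ i, satisfying the genericity conditions: λ_j ∉ ℤ for all j, and (λ_p ± λ_q)/2 ∉ ℤ for all p ≠ q. Let w ∈ W and suppose that either w e_1 ∈ {−e_1,…,−e_r}, or there exists 1 ≤ j ≤ i−1 such that w(e_{j+1} − e_j) ∈ {e_q − e_p : 1 ≤ q < p ≤ r} ∪ {−e_p − e_q : 1 ≤ q < p ≤ r} (i.e. w does not map all simple roots of Θ_i to positive roots). Then c̃(wλ, k) = 0, where wλ denotes the image of λ under w. Under the genericity conditions all Gamma factors occurring in numerators of c̃(wλ,k) are finite, so the vanishing is genuine. -/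

import Mathlib

/-!
A reciprocal Gamma factor `Γ(z)⁻¹` of `c̃(wλ, k)` vanishes as soon as `z ∈ -ℕ`. Since `W` preserves
the standard bilinear pairing, `⟨wλ, wv⟩ = ⟨λ, v⟩`. If `w e₁ = -e_p` this gives `(wλ)_p = -ξ₁`, and the
condition `ξ₁ + |𝛃| - 𝛂 - 1 ∈ 2ℕ` puts `(-ξ₁ + k_s + 1)/2` (if `𝛃 ≥ 0`) or `(-ξ₁ + k_s + 2k_ℓ)/2`
(if `𝛃 < 0`) in `-ℕ`. If `w(e_{j+1} - e_j)` is `e_q - e_p` or `-e_p - e_q`, it gives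
`(wλ)_p ∓ (wλ)_q = ξ_j - ξ_{j+1} ∈ -2k_m - 2ℕ`, so the `k_m`-shifted factor of the pair `(p, q)` vanishes.
-/

noncomputable section

/-- The `c̃`-function of type `BC_r` with multiplicities `(ks, km, kl)`; the
reciprocal Gamma factors are written as inverses (`Complex.Gamma` vanishes at
nonpositive integers, so `(Complex.Gamma z)⁻¹` is the entire reciprocal Gamma
function). -/
def ctilde (r : ℕ) (ks km kl : ℝ) (l : Fin r → ℂ) : ℂ :=
  (∏ p : Fin r, ∏ q : Fin r,
    if (q : ℕ) < (p : ℕ) then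
      Complex.Gamma ((l p - l q) / 2) * Complex.Gamma ((l p + l q) / 2) *
        (Complex.Gamma ((l p - l q) / 2 + (km : ℂ)))⁻¹ *
        (Complex.Gamma ((l p + l q) / 2 + (km : ℂ)))⁻¹
    else 1) *
  ∏ j : Fin r,
    (2 : ℂ) ^ (-(ks : ℂ)) * Complex.Gamma (l j / 2) * Complex.Gamma ((l j + 1) / 2) *
      (Complex.Gamma ((l j + (ks : ℂ) + 1) / 2))⁻¹ *
      (Complex.Gamma ((l j + (ks : ℂ) + 2 * (kl : ℂ)) / 2))⁻¹

/-- Action on `ℂ^r` of the element of the Weyl group of type `BC_r` given by the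
sign vector `ε` and the permutation `σ`. -/
def wAct (r : ℕ) (ε : Fin r → ℤˣ) (σ : Equiv.Perm (Fin r)) (l : Fin r → ℂ) : Fin r → ℂ :=
  fun j => ((ε j : ℤ) : ℂ) * l (σ⁻¹ j)

/-- The standard basis vector `e_m` of `ℂ^r`. -/
def eVec (r : ℕ) (m : Fin r) : Fin r → ℂ := fun j => if j = m then 1 else 0

section Ctilde

variable (r : ℕ) (ks km kl : ℝ) (L : Fin r → ℂ)

theorem ctilde_eq_zero_of_short_root (p : Fin r) (n : ℕ)
    (h : (L p + ks + 1) / 2 = -n ∨ (L p + ks + 2 * kl) / 2 = -n) :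
    ctilde r ks km kl L = 0 := by
  apply mul_eq_zero_of_right
  apply Finset.prod_eq_zero (Finset.mem_univ p)
  rcases h with h | h <;> simp [h, Complex.Gamma_neg_nat_eq_zero]

theorem ctilde_eq_zero_of_medium_root (p q : Fin r) (hqp : (q : ℕ) < p) (n : ℕ)
    (h : (L p - L q) / 2 + km = -n ∨ (L p + L q) / 2 + km = -n) :
    ctilde r ks km kl L = 0 := by
  apply mul_eq_zero_of_left
  apply Finset.prod_eq_zero (Finset.mem_univ p)
  apply Finset.prod_eq_zero (Finset.mem_univ q)
  rcases h with h | h <;> simp [hqp, h, Complex.Gamma_neg_nat_eq_zero]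

end Ctilde

section WeylAction

variable {r : ℕ} (ε : Fin r → ℤˣ) (σ : Equiv.Perm (Fin r))

theorem eVec_eq_single (m : Fin r) : eVec r m = Pi.single m 1 := by
  ext j
  simp [eVec, Pi.single_apply]

theorem dotProduct_eVec (x : Fin r → ℂ) (m : Fin r) : x ⬝ᵥ eVec r m = x m := by
  rw [eVec_eq_single, dotProduct_single, mul_one]

theorem wAct_dotProduct_wAct (x y : Fin r → ℂ) :
    wAct r ε σ x ⬝ᵥ wAct r ε σ y = x ⬝ᵥ y := by
  have hε : ∀ j, ((ε j : ℤ) : ℂ) * ((ε j : ℤ) : ℂ) = 1 := fun j => by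
    rw [← Int.cast_mul, ← Units.val_mul, Int.units_mul_self, Units.val_one, Int.cast_one]
  calc wAct r ε σ x ⬝ᵥ wAct r ε σ y = ∑ j, x (σ⁻¹ j) * y (σ⁻¹ j) := by
        refine Finset.sum_congr rfl fun j _ => ?_
        simp only [wAct]
        linear_combination x (σ⁻¹ j) * y (σ⁻¹ j) * hε j
    _ = x ⬝ᵥ y := Equiv.sum_comp σ⁻¹ fun j => x j * y j

theorem wAct_dotProduct_of_wAct_eq {u v : Fin r → ℂ} (h : wAct r ε σ v = u) (x : Fin r → ℂ) :
    wAct r ε σ x ⬝ᵥ u = x ⬝ᵥ v := by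
  rw [← h, wAct_dotProduct_wAct]

end WeylAction

theorem exists_short_root_arg_eq_neg_nat {ks kl x : ℝ}
    (h : ∃ n : ℕ, x + |kl - 1 / 2| - (ks + kl - 1 / 2) - 1 = 2 * (n : ℝ)) :
    ∃ n : ℕ, (-(x : ℂ) + ks + 1) / 2 = -n ∨ (-(x : ℂ) + ks + 2 * kl) / 2 = -n := by
  obtain ⟨n, hn⟩ := h
  refine ⟨n, ?_⟩
  rcases le_or_gt 0 (kl - 1 / 2) with hβ | hβ
  · rw [abs_of_nonneg hβ] at hn
    left
    have hx : x = 2 * n + ks + 1 := by linarith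
    rw [hx]; push_cast; ring
  · rw [abs_of_neg hβ] at hn
    right
    have hx : x = 2 * n + ks + 2 * kl := by linarith
    rw [hx]; push_cast; ring

theorem stmt2 (r : ℕ) (ks km kl α β : ℝ) (hα : α = ks + kl - 1 / 2) (hβ : β = kl - 1 / 2)
    (i : ℕ) (hi : 1 ≤ i) (hir : i ≤ r)
    (ξ : ℕ → ℝ)
    -- `(ξ_1, …, ξ_i) ∈ D_k(Θ_i)`, with 0-based indices:
    (hd1 : ∃ n : ℕ, ξ 0 + |β| - α - 1 = 2 * (n : ℝ))
    (hd3 : ∀ j : ℕ, j + 1 < i → ∃ n : ℕ, ξ (j + 1) - ξ j - 2 * km = 2 * (n : ℝ))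
    (l : Fin r → ℂ)
    (hlξ : ∀ j : Fin r, (j : ℕ) < i → l j = ((ξ (j : ℕ) : ℝ) : ℂ))
    (ε : Fin r → ℤˣ) (σ : Equiv.Perm (Fin r))
    -- `w` does not map all simple roots of `Θ_i` to positive roots:
    (hw : (∃ p : Fin r, wAct r ε σ (eVec r ⟨0, by omega⟩) = -eVec r p) ∨
      (∃ j : ℕ, ∃ h : j + 1 < i,
        ∃ p q : Fin r, (q : ℕ) < (p : ℕ) ∧
          (wAct r ε σ (eVec r ⟨j + 1, by omega⟩ - eVec r ⟨j, by omega⟩) = eVec r q - eVec r p ∨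
           wAct r ε σ (eVec r ⟨j + 1, by omega⟩ - eVec r ⟨j, by omega⟩) =
             -eVec r p - eVec r q))) :
    ctilde r ks km kl (wAct r ε σ l) = 0 := by
  rcases hw with ⟨p, hp⟩ | ⟨j, hj, p, q, hqp, hpq⟩
  · have hpair := wAct_dotProduct_of_wAct_eq ε σ hp l
    rw [dotProduct_neg, dotProduct_eVec, dotProduct_eVec, hlξ ⟨0, by omega⟩ hi,
      neg_eq_iff_eq_neg] at hpair
    subst hα hβ
    obtain ⟨n, hn⟩ := exists_short_root_arg_eq_neg_nat hd1
    exact ctilde_eq_zero_of_short_root r ks km kl _ p n (by rw [hpair]; exact hn)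
  · obtain ⟨n, hn⟩ := hd3 j hj
    have hstep : l ⟨j + 1, by omega⟩ - l ⟨j, by omega⟩ = 2 * km + 2 * n := by
      rw [hlξ _ hj, hlξ _ (Nat.lt_of_succ_lt hj)]
      exact_mod_cast (by linarith : ξ (j + 1) - ξ j = 2 * km + 2 * n)
    refine ctilde_eq_zero_of_medium_root r ks km kl _ p q hqp n ?_
    rcases hpq with hpq | hpq <;>
      have hpair := wAct_dotProduct_of_wAct_eq ε σ hpq l <;>
      simp only [dotProduct_sub, dotProduct_neg, dotProduct_eVec, hstep] at hpair
    · left; linear_combination -hpair / 2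
    · right; linear_combination -hpair / 2
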